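/- For Z in the Siegel upper half space ℍ₂ define y₀ = θ[(0,0),(1,1)](Z)⁴, y₁ = θ[(0,0),(0,1)](Z)⁴, y₂ = θ[(0,0),(0,0)](Z)⁴, y₃ = −θ[(1,0),(0,0)](Z)⁴ − θ[(0,0),(1,1)](Z)⁴, y₄ = −θ[(1,0),(0,1)](Z)⁴ − θ[(0,0),(1,1)](Z)⁴. Then for every Z ∈ ℍ₂: 2·θ[(0,0),(0,1)](Z)²·θ[(0,0),(0,0)](Z)²·θ[(0,0),(1,0)](Z)²·θ[(0,0),(1,1)](Z)² = y₀y₁ + y₀y₂ + y₁y₂ − y₃y₄. -/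

import Mathlib

open Matrix Complex

/-- The Siegel upper half space of genus 2: symmetric complex 2×2 matrices with
positive definite imaginary part. -/
def SiegelH2 : Set (Matrix (Fin 2) (Fin 2) ℂ) :=
  {Z | Z.IsSymm ∧ (Matrix.of fun i j => (Z i j).im).PosDef}

/-- The summand of the theta series with characteristic `(a,b)`:
`exp(πi((g+a/2)ᵀ Z (g+a/2) + bᵀ(g+a/2)))`. -/
noncomputable def thetaTerm (a b : Fin 2 → ℤ) (Z : Matrix (Fin 2) (Fin 2) ℂ)
    (g : Fin 2 → ℤ) : ℂ :=
  Complex.exp (Real.pi * Complex.I *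
    ((∑ i, ∑ j, ((g i : ℂ) + (a i : ℂ) / 2) * Z i j * ((g j : ℂ) + (a j : ℂ) / 2)) +
      ∑ i, (b i : ℂ) * ((g i : ℂ) + (a i : ℂ) / 2)))

/-- The theta constant `θ[a,b](Z) = Σ_{g∈ℤ²} exp(πi((g+a/2)ᵀ Z (g+a/2) + bᵀ(g+a/2)))`. -/
noncomputable def theta (a b : Fin 2 → ℤ) (Z : Matrix (Fin 2) (Fin 2) ℂ) : ℂ :=
  ∑' g : Fin 2 → ℤ, thetaTerm a b Z g

/-- The modular forms `y₀,…,y₄` of Igusa. -/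
noncomputable def yg (Z : Matrix (Fin 2) (Fin 2) ℂ) : Fin 5 → ℂ :=
  ![theta ![0, 0] ![1, 1] Z ^ 4,
    theta ![0, 0] ![0, 1] Z ^ 4,
    theta ![0, 0] ![0, 0] Z ^ 4,
    -theta ![1, 0] ![0, 0] Z ^ 4 - theta ![0, 0] ![1, 1] Z ^ 4,
    -theta ![1, 0] ![0, 1] Z ^ 4 - theta ![0, 0] ![1, 1] Z ^ 4]

/-! Writing a pair of lattice points as `(m + n + c, m - n)` with `c ∈ {0,1}²` a parity class,
the parallelogram law `Q(x) + Q(y) = 2 Q((x+y)/2) + 2 Q((x-y)/2)` turns `θ[a,b](Z)²` into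
`Σ_c ± θ[a+c,0](2Z) θ[c,0](2Z)`. Substituting this for the six theta squares in the statement,
Igusa's relation becomes a polynomial identity in the four theta constants `θ[c,0](2Z)`. -/

lemma exists_pos_mul_sq_le_im_quadForm {Z : Matrix (Fin 2) (Fin 2) ℂ} (hZ : Z ∈ SiegelH2) :
    ∃ c : ℝ, 0 < c ∧ ∀ x : Fin 2 → ℝ,
      c * (x 0 ^ 2 + x 1 ^ 2) ≤ ∑ i, ∑ j, x i * (Z i j).im * x j := by
  obtain ⟨hsym, hpd⟩ := hZ
  set p := (Z 0 0).im
  set q := (Z 1 1).im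
  set r := (Z 0 1).im
  have hr : (Z 1 0).im = r := congrArg Complex.im (hsym.apply 0 1)
  have hp : 0 < p := by
    simpa [mulVec, dotProduct] using hpd.dotProduct_mulVec_pos (x := ![1, 0]) (by simp)
  have hq : 0 < q := by
    simpa [mulVec, dotProduct] using hpd.dotProduct_mulVec_pos (x := ![0, 1]) (by simp)
  have hdet : 0 < p * q - r * r := by simpa [det_fin_two, hr] using hpd.det_pos
  refine ⟨(p * q - r * r) / (p + q), by positivity, fun x => ?_⟩
  simp only [Fin.sum_univ_two, hr]
  rw [div_mul_eq_mul_div, div_le_iff₀ (by positivity)]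
  nlinarith [sq_nonneg (x 0 * p + x 1 * r), sq_nonneg (x 0 * r + x 1 * q)]

lemma summable_exp_neg_pi_mul_int_sq {T : ℝ} (hT : 0 < T) :
    Summable fun n : ℤ => Real.exp (-Real.pi * T * n ^ 2) := by
  simpa [mul_assoc] using summable_pow_mul_jacobiTheta₂_term_bound 0 hT 0

lemma Summable.mul_apply_fin_two {f : ℤ → ℝ} (hf : Summable f) (hf0 : 0 ≤ f) :
    Summable fun g : Fin 2 → ℤ => f (g 0) * f (g 1) := by
  rw [← (finTwoArrowEquiv ℤ).symm.summable_iff]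
  exact hf.mul_of_nonneg hf hf0 hf0

lemma norm_thetaTerm (a b : Fin 2 → ℤ) (Z : Matrix (Fin 2) (Fin 2) ℂ) (g : Fin 2 → ℤ) :
    ‖thetaTerm a b Z g‖ = Real.exp (-Real.pi *
      ∑ i, ∑ j, (g i + a i / 2 : ℝ) * (Z i j).im * (g j + a j / 2 : ℝ)) := by
  have hx (i : Fin 2) : (g i : ℂ) + (a i : ℂ) / 2 = ((g i + a i / 2 : ℝ) : ℂ) := by
    push_cast; rfl
  simp only [thetaTerm, Complex.norm_exp, hx, ← Complex.ofReal_intCast (b _), ← ofReal_mul,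
    ← ofReal_sum, Complex.mul_re, Complex.mul_im]
  simp

lemma summable_norm_thetaTerm {Z : Matrix (Fin 2) (Fin 2) ℂ} (hZ : Z ∈ SiegelH2)
    (a b : Fin 2 → ℤ) : Summable fun g => ‖thetaTerm a b Z g‖ := by
  obtain ⟨c, hc, hQ⟩ := exists_pos_mul_sq_le_im_quadForm hZ
  have hsq (i : Fin 2) (n : ℤ) :
      (n : ℝ) ^ 2 / 2 - (a i / 2 : ℝ) ^ 2 ≤ (n + a i / 2 : ℝ) ^ 2 := by
    nlinarith [sq_nonneg (n + a i : ℝ)]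
  refine Summable.of_nonneg_of_le (fun _ => norm_nonneg _) (fun g => ?_)
    (((summable_exp_neg_pi_mul_int_sq (half_pos hc)).mul_apply_fin_two
      fun _ => (Real.exp_pos _).le).mul_left
        (Real.exp (Real.pi * c * ((a 0 / 2 : ℝ) ^ 2 + (a 1 / 2 : ℝ) ^ 2))))
  rw [norm_thetaTerm, ← Real.exp_add, ← Real.exp_add, Real.exp_le_exp]
  have hπQ := mul_le_mul_of_nonneg_left (hQ fun i => g i + a i / 2) Real.pi_pos.le
  have hπc := mul_le_mul_of_nonneg_left (add_le_add (hsq 0 (g 0)) (hsq 1 (g 1)))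
    (mul_pos Real.pi_pos hc).le
  linarith

lemma smul_mem_SiegelH2 {Z : Matrix (Fin 2) (Fin 2) ℂ} (hZ : Z ∈ SiegelH2) {r : ℝ}
    (hr : 0 < r) :
    (r : ℂ) • Z ∈ SiegelH2 := by
  refine ⟨by simp [IsSymm, transpose_smul, hZ.1.eq], ?_⟩
  convert hZ.2.smul hr using 1
  ext i j
  simp

def parityVec (s : Bool × Bool) : Fin 2 → ℤ := ![s.1.toNat, s.2.toNat]

lemma toNat_decide_emod_two (k : ℤ) : ((decide (k % 2 = 1)).toNat : ℤ) = k % 2 := by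
  rcases Int.emod_two_eq k with h | h <;> simp [h]

def parityAddSubEquiv :
    (Bool × Bool) × (Fin 2 → ℤ) × (Fin 2 → ℤ) ≃ (Fin 2 → ℤ) × (Fin 2 → ℤ) where
  toFun q := (q.2.1 + q.2.2 + parityVec q.1, q.2.1 - q.2.2)
  invFun p :=
    ((decide ((p.1 0 + p.2 0) % 2 = 1), decide ((p.1 1 + p.2 1) % 2 = 1)),
      fun i => (p.1 i + p.2 i) / 2, fun i => (p.1 i + p.2 i) / 2 - p.2 i)
  left_inv := by
    rintro ⟨⟨s₀, s₁⟩, m, n⟩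
    cases s₀ <;> cases s₁ <;>
      simp [parityVec, Prod.ext_iff, funext_iff, Fin.forall_fin_two] <;> omega
  right_inv := by
    rintro ⟨u, v⟩
    ext i <;> fin_cases i <;> simp [parityVec, toNat_decide_emod_two] <;> omega

lemma thetaTerm_add_two_smul (a b d : Fin 2 → ℤ) (Z : Matrix (Fin 2) (Fin 2) ℂ)
    (g : Fin 2 → ℤ) :
    thetaTerm (a + 2 • d) b Z g = thetaTerm a b Z (g + d) := by
  have hshift (i : Fin 2) :
      (g i : ℂ) + ((a + 2 • d) i : ℂ) / 2 = ((g + d) i : ℂ) + (a i : ℂ) / 2 := by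
    rw [Pi.add_apply, Pi.add_apply, Pi.smul_apply, nsmul_eq_mul]
    push_cast
    ring
  simp only [thetaTerm, hshift]

lemma theta_add_two_smul (a b d : Fin 2 → ℤ) (Z : Matrix (Fin 2) (Fin 2) ℂ) :
    theta (a + 2 • d) b Z = theta a b Z := by
  simp only [theta, thetaTerm_add_two_smul]
  exact (Equiv.addRight d).tsum_eq (thetaTerm a b Z)

lemma thetaTerm_mul_thetaTerm (a b c : Fin 2 → ℤ) (Z : Matrix (Fin 2) (Fin 2) ℂ)
    (m n : Fin 2 → ℤ) :
    thetaTerm a b Z (m + n + c) * thetaTerm a b Z (m - n) =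
      (-1) ^ (∑ i, b i * (a i + c i)) *
        (thetaTerm (a + c) 0 ((2 : ℂ) • Z) m * thetaTerm c 0 ((2 : ℂ) • Z) n) := by
  rw [← exp_pi_mul_I, ← exp_int_mul]
  simp only [thetaTerm, ← exp_add, exp_eq_exp_iff_exists_int]
  -- the linear terms sum to `b ⬝ (2m + a + c)`, so the exponents differ by `2πi (b ⬝ m)`
  refine ⟨∑ i, b i * m i, ?_⟩
  simp only [Fin.sum_univ_two, Pi.add_apply, Pi.sub_apply, Pi.zero_apply, Matrix.smul_apply,
    smul_eq_mul]
  push_cast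
  ring

lemma theta_sq_eq_sum {Z : Matrix (Fin 2) (Fin 2) ℂ} (hZ : Z ∈ SiegelH2) (a b : Fin 2 → ℤ) :
    theta a b Z ^ 2 = ∑ s : Bool × Bool, (-1) ^ (∑ i, b i * (a i + parityVec s i)) *
      (theta (a + parityVec s) 0 ((2 : ℂ) • Z) * theta (parityVec s) 0 ((2 : ℂ) • Z)) := by
  have h2Z : (2 : ℂ) • Z ∈ SiegelH2 := by exact_mod_cast smul_mem_SiegelH2 hZ two_pos
  have hf := summable_norm_thetaTerm hZ a b
  have hpairs : Summable fun q => thetaTerm a b Z (parityAddSubEquiv q).1 *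
      thetaTerm a b Z (parityAddSubEquiv q).2 :=
    parityAddSubEquiv.summable_iff.mpr (hf.mul_norm hf).of_norm
  calc theta a b Z ^ 2
      = ∑' p : (Fin 2 → ℤ) × (Fin 2 → ℤ), thetaTerm a b Z p.1 * thetaTerm a b Z p.2 := by
        rw [sq, theta, tsum_mul_tsum_of_summable_norm hf hf]
    _ = ∑ s, ∑' p : (Fin 2 → ℤ) × (Fin 2 → ℤ),
          thetaTerm a b Z (p.1 + p.2 + parityVec s) * thetaTerm a b Z (p.1 - p.2) := by
        rw [← parityAddSubEquiv.tsum_eq, hpairs.tsum_prod' hpairs.prod_factor, tsum_fintype]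
        rfl
    _ = _ := by
        refine Finset.sum_congr rfl fun s _ => ?_
        simp only [thetaTerm_mul_thetaTerm, tsum_mul_left, theta]
        rw [tsum_mul_tsum_of_summable_norm (summable_norm_thetaTerm h2Z _ _)
          (summable_norm_thetaTerm h2Z _ _)]

lemma theta_two_vecCons (a₁ : ℤ) (b : Fin 2 → ℤ) (Z : Matrix (Fin 2) (Fin 2) ℂ) :
    theta ![2, a₁] b Z = theta ![0, a₁] b Z := by
  simpa using theta_add_two_smul ![0, a₁] b ![1, 0] Z

/-- Igusa's relation: twice the square of the product of the four theta constants of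
the standard syzygetic quadruple equals `y₀y₁ + y₀y₂ + y₁y₂ − y₃y₄`. -/
theorem stmt_11 (Z : Matrix (Fin 2) (Fin 2) ℂ) (hZ : Z ∈ SiegelH2) :
    2 * theta ![0, 0] ![0, 1] Z ^ 2 * theta ![0, 0] ![0, 0] Z ^ 2 *
        theta ![0, 0] ![1, 0] Z ^ 2 * theta ![0, 0] ![1, 1] Z ^ 2 =
      yg Z 0 * yg Z 1 + yg Z 0 * yg Z 2 + yg Z 1 * yg Z 2 - yg Z 3 * yg Z 4 := by
  have hpow (a b : Fin 2 → ℤ) : theta a b Z ^ 4 = (theta a b Z ^ 2) ^ 2 := by ring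
  simp only [yg, hpow, cons_val_zero, cons_val_one, cons_val_two,
    cons_val_three, cons_val_four, head_cons, tail_cons]
  simp only [theta_sq_eq_sum hZ, Fintype.sum_prod_type, Fintype.sum_bool, parityVec,
    Bool.toNat_true, Bool.toNat_false, Fin.sum_univ_two, cons_val_zero, cons_val_one,
    cons_add_cons, empty_add_empty]
  norm_num [theta_two_vecCons]
  ring
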